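/- arXiv:2410.08095 — 3 statements merged into one kernel-verified Lean document; each statement's English description precedes it below -/
import Mathlib

section
/- In the recursive construction of the intermediate vector, the indices strictly decrease and the ratios strictly increase: the recursion terminates at some finite k with d+1 = l_0 > l_1 > l_2 > ⋯ > l_k = 1, and 0 < q_1 < q_2 < ⋯ < q_k. -/
open Finset

/-- Tail-sum coherence monotone `C_l(p) = ∑_{i=l}^d p_i`, for a vector with (1-based)
entries `p 1, …, p d`.  Note `Cm d p (d+1) = 0` automatically. -/
noncomputable def Cm (d : ℕ) (p : ℕ → ℝ) (l : ℕ) : ℝ := ∑ i ∈ Finset.Icc l d, p i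

/-- `p` is a descending probability vector on the (1-based) index range `{1, …, d}`. -/
structure DescProb (d : ℕ) (p : ℕ → ℝ) : Prop where
  nonneg : ∀ i, 1 ≤ i → i ≤ d → 0 ≤ p i
  anti : ∀ i j, 1 ≤ i → i ≤ j → j ≤ d → p j ≤ p i
  sum_one : ∑ i ∈ Finset.Icc 1 d, p i = 1

/-- `p ≺ q` : `p` is majorized by `q` (both regarded as descending vectors on `{1, …, d}`). -/
def MajorizedBy (d : ℕ) (p q : ℕ → ℝ) : Prop :=
  (∀ k, 1 ≤ k → k ≤ d → ∑ i ∈ Finset.Icc 1 k, p i ≤ ∑ i ∈ Finset.Icc 1 k, q i) ∧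
    ∑ i ∈ Finset.Icc 1 d, p i = ∑ i ∈ Finset.Icc 1 d, q i

/-- The ratio `(C_l(ψ) - C_prev(ψ)) / (C_l(φ) - C_prev(φ))` appearing in the recursive
construction of the intermediate vector. -/
noncomputable def ratio (d : ℕ) (ψ φ : ℕ → ℝ) (prev l : ℕ) : ℝ :=
  (Cm d ψ l - Cm d ψ prev) / (Cm d φ l - Cm d φ prev)

/-- One step of the recursion: the minimal ratio over `l ∈ {1, …, prev - 1}`. -/
noncomputable def stepQ (d : ℕ) (ψ φ : ℕ → ℝ) (prev : ℕ) : ℝ :=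
  sInf {x : ℝ | ∃ l, 1 ≤ l ∧ l ≤ prev - 1 ∧ x = ratio d ψ φ prev l}

/-- One step of the recursion: the smallest `l ∈ {1, …, prev - 1}` attaining the minimal
ratio. -/
noncomputable def stepL (d : ℕ) (ψ φ : ℕ → ℝ) (prev : ℕ) : ℕ :=
  sInf {l : ℕ | 1 ≤ l ∧ l ≤ prev - 1 ∧ ratio d ψ φ prev l = stepQ d ψ φ prev}

/-- The sequence of indices `l_0 = d + 1 > l_1 > l_2 > ⋯` of the recursive construction. -/
noncomputable def Lseq (d : ℕ) (ψ φ : ℕ → ℝ) : ℕ → ℕ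
  | 0 => d + 1
  | j + 1 => stepL d ψ φ (Lseq d ψ φ j)

/-- The sequence of ratios `q_1 < q_2 < ⋯` of the recursive construction (`Qseq d ψ φ j`
is `q_j` for `j ≥ 1`; the value at `0` is irrelevant). -/
noncomputable def Qseq (d : ℕ) (ψ φ : ℕ → ℝ) : ℕ → ℝ
  | 0 => 1
  | j + 1 => stepQ d ψ φ (Lseq d ψ φ j)

/-- The terminating step `k` of the recursion: the first index `j` with `l_j = 1`. -/
noncomputable def kstop (d : ℕ) (ψ φ : ℕ → ℝ) : ℕ := sInf {j : ℕ | Lseq d ψ φ j = 1}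

/-- The intermediate vector `φ^f`, with `φ^f_i = q_j φ_i` for `i ∈ {l_j, …, l_{j-1} - 1}`
(for `i ∈ {1, …, d}`, the smallest `j` with `l_j ≤ i` is precisely the `j` with
`l_j ≤ i ≤ l_{j-1} - 1`). -/
noncomputable def phif (d : ℕ) (ψ φ : ℕ → ℝ) (i : ℕ) : ℝ :=
  Qseq d ψ φ (sInf {j : ℕ | Lseq d ψ φ j ≤ i}) * φ i

/-! The index `l_j` is the *smallest* minimiser of the ratio, so every `l < l_j` has ratio
strictly above `q_j`. Splitting `C_l − C_{l_{j−1}}` as `(C_l − C_{l_j}) + (C_{l_j} − C_{l_{j−1}})`,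
where the second piece has ratio exactly `q_j`, the mediant inequality forces the ratio of the
first piece, which is the ratio over `(l_j, l)` minimised by `q_{j+1}`, to exceed `q_j` as well.
Termination holds because the `l_j` strictly decrease in `ℕ` while they stay `≥ 2`. -/

lemma lt_div_of_lt_add_div {a b c e q : ℝ} (he : 0 < e) (hbe : 0 < b + e) (ha : a = q * b)
    (h : q < (a + c) / (b + e)) : q < c / e := by
  rw [lt_div_iff₀ hbe, ha] at h
  rw [lt_div_iff₀ he]
  linarith

section Descent

variable {f : ℕ → ℕ} (h0 : 1 ≤ f 0) (hstep : ∀ j, 2 ≤ f j → 1 ≤ f (j + 1) ∧ f (j + 1) < f j)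
include h0 hstep

lemma one_le_and_add_le_of_forall_lt_ne_one {j : ℕ} (hj : ∀ i < j, f i ≠ 1) :
    1 ≤ f j ∧ f j + j ≤ f 0 := by
  induction j with
  | zero => exact ⟨h0, le_rfl⟩
  | succ j ih =>
    obtain ⟨hpos, hle⟩ := ih fun i hi => hj i (by omega)
    have := hstep j (by have := hj j (by omega); omega)
    omega

lemma exists_eq_one_of_decreasing_above_one : ∃ k, f k = 1 := by
  by_contra! hne
  have := one_le_and_add_le_of_forall_lt_ne_one h0 hstep (j := f 0) fun i _ => hne i
  omega

end Descent

section Recursion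

variable {d : ℕ} {ψ φ : ℕ → ℝ}

lemma Cm_sub_Cm_eq_sum_Ico (p : ℕ → ℝ) {l prev : ℕ} (hl : l ≤ prev) (hprev : prev ≤ d + 1) :
    Cm d p l - Cm d p prev = ∑ i ∈ Ico l prev, p i := by
  rw [Cm, Cm, ← Ico_add_one_right_eq_Icc, ← Ico_add_one_right_eq_Icc,
    ← sum_Ico_consecutive p hl hprev, add_sub_cancel_right]

lemma Cm_sub_Cm_pos {p : ℕ → ℝ} (hp : ∀ i, 1 ≤ i → i ≤ d → 0 < p i) {l prev : ℕ} (hl1 : 1 ≤ l)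
    (hl : l < prev) (hprev : prev ≤ d + 1) : 0 < Cm d p l - Cm d p prev := by
  rw [Cm_sub_Cm_eq_sum_Ico p hl.le hprev]
  refine sum_pos (fun i hi => ?_) ⟨l, mem_Ico.mpr ⟨le_rfl, hl⟩⟩
  rw [mem_Ico] at hi
  exact hp i (hl1.trans hi.1) (by omega)

lemma ratio_pos (hψ : ∀ i, 1 ≤ i → i ≤ d → 0 < ψ i) (hφ : ∀ i, 1 ≤ i → i ≤ d → 0 < φ i)
    {prev l : ℕ} (hl1 : 1 ≤ l) (hl : l < prev) (hprev : prev ≤ d + 1) :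
    0 < ratio d ψ φ prev l :=
  div_pos (Cm_sub_Cm_pos hψ hl1 hl hprev) (Cm_sub_Cm_pos hφ hl1 hl hprev)

lemma stepQ_eq_sInf_image (prev : ℕ) :
    stepQ d ψ φ prev = sInf (ratio d ψ φ prev '' Set.Icc 1 (prev - 1)) := by
  rw [stepQ]
  congr 1
  ext x
  simp only [Set.mem_ofPred_eq, Set.mem_image, Set.mem_Icc, and_assoc, eq_comm]

lemma stepQ_le_ratio {prev l : ℕ} (hl1 : 1 ≤ l) (hl : l ≤ prev - 1) :
    stepQ d ψ φ prev ≤ ratio d ψ φ prev l := by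
  rw [stepQ_eq_sInf_image]
  exact csInf_le ((Set.finite_Icc _ _).image _).bddBelow ⟨l, ⟨hl1, hl⟩, rfl⟩

lemma exists_ratio_eq_stepQ {prev : ℕ} (hprev : 2 ≤ prev) :
    ∃ l, 1 ≤ l ∧ l ≤ prev - 1 ∧ ratio d ψ φ prev l = stepQ d ψ φ prev := by
  rw [stepQ_eq_sInf_image]
  obtain ⟨l, ⟨hl1, hl⟩, hq⟩ := Set.Nonempty.csInf_mem
    ((Set.nonempty_Icc.mpr (by omega : 1 ≤ prev - 1)).image (ratio d ψ φ prev))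
    ((Set.finite_Icc _ _).image _)
  exact ⟨l, hl1, hl, hq⟩

lemma stepL_spec {prev : ℕ} (hprev : 2 ≤ prev) :
    1 ≤ stepL d ψ φ prev ∧ stepL d ψ φ prev ≤ prev - 1 ∧
      ratio d ψ φ prev (stepL d ψ φ prev) = stepQ d ψ φ prev :=
  Nat.sInf_mem (exists_ratio_eq_stepQ hprev)

lemma stepQ_lt_ratio_of_lt_stepL {prev l : ℕ} (hprev : 2 ≤ prev) (hl1 : 1 ≤ l)
    (hl : l < stepL d ψ φ prev) : stepQ d ψ φ prev < ratio d ψ φ prev l := by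
  have hl_le : l ≤ prev - 1 := hl.le.trans (stepL_spec hprev).2.1
  refine (stepQ_le_ratio hl1 hl_le).lt_of_ne fun heq => ?_
  exact hl.not_ge (Nat.sInf_le ⟨hl1, hl_le, heq.symm⟩)

lemma stepQ_pos (hψ : ∀ i, 1 ≤ i → i ≤ d → 0 < ψ i) (hφ : ∀ i, 1 ≤ i → i ≤ d → 0 < φ i)
    {prev : ℕ} (hprev : 2 ≤ prev) (hprev_le : prev ≤ d + 1) : 0 < stepQ d ψ φ prev := by
  obtain ⟨l, hl1, hl, hq⟩ := exists_ratio_eq_stepQ (ψ := ψ) (φ := φ) hprev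
  exact hq ▸ ratio_pos hψ hφ hl1 (by omega) hprev_le

lemma stepQ_lt_stepQ_stepL (hφ : ∀ i, 1 ≤ i → i ≤ d → 0 < φ i) {prev : ℕ} (hprev : 2 ≤ prev)
    (hprev_le : prev ≤ d + 1) (hL : 2 ≤ stepL d ψ φ prev) :
    stepQ d ψ φ prev < stepQ d ψ φ (stepL d ψ φ prev) := by
  set L := stepL d ψ φ prev
  obtain ⟨-, hL_lt, hL_ratio⟩ := stepL_spec (d := d) (ψ := ψ) (φ := φ) hprev
  obtain ⟨l, hl1, hlL, hl_ratio⟩ := exists_ratio_eq_stepQ (d := d) (ψ := ψ) (φ := φ) hL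
  have hφ_prev : 0 < Cm d φ L - Cm d φ prev := Cm_sub_Cm_pos hφ (by omega) (by omega) hprev_le
  have hφ_L : 0 < Cm d φ l - Cm d φ L := Cm_sub_Cm_pos hφ hl1 (by omega) (by omega)
  have hψ_prev : Cm d ψ L - Cm d ψ prev = stepQ d ψ φ prev * (Cm d φ L - Cm d φ prev) :=
    (div_eq_iff hφ_prev.ne').mp hL_ratio
  have h_l := stepQ_lt_ratio_of_lt_stepL (d := d) (ψ := ψ) (φ := φ) hprev hl1 (by omega)
  rw [← hl_ratio]
  refine lt_div_of_lt_add_div hφ_L (by linarith) hψ_prev ?_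
  simpa only [ratio, sub_add_sub_cancel'] using h_l

end Recursion

theorem recursion_terminates_general (d : ℕ) (hd : 1 ≤ d) (ψ φ : ℕ → ℝ)
    (hψpos : ∀ i, 1 ≤ i → i ≤ d → 0 < ψ i) (hφpos : ∀ i, 1 ≤ i → i ≤ d → 0 < φ i) :
    ∃ k, Lseq d ψ φ k = 1 ∧ (∀ j, j < k → Lseq d ψ φ j ≠ 1) ∧
      (∀ j, j < k → Lseq d ψ φ (j + 1) < Lseq d ψ φ j) ∧
      0 < Qseq d ψ φ 1 ∧
      (∀ j, 1 ≤ j → j < k → Qseq d ψ φ j < Qseq d ψ φ (j + 1)) := by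
  classical
  have hL0 : 1 ≤ Lseq d ψ φ 0 := Nat.le_add_left 1 d
  have hstep (j : ℕ) (hj : 2 ≤ Lseq d ψ φ j) :
      1 ≤ Lseq d ψ φ (j + 1) ∧ Lseq d ψ φ (j + 1) < Lseq d ψ φ j := by
    obtain ⟨hL1, hL_lt, -⟩ := stepL_spec (d := d) (ψ := ψ) (φ := φ) hj
    exact ⟨hL1, by simp only [Lseq]; omega⟩
  have hk := exists_eq_one_of_decreasing_above_one hL0 hstep
  have hrange (j : ℕ) (hj : j < Nat.find hk) : 2 ≤ Lseq d ψ φ j ∧ Lseq d ψ φ j ≤ d + 1 := by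
    have hbound := one_le_and_add_le_of_forall_lt_ne_one hL0 hstep
      fun i hi => Nat.find_min hk (hi.trans hj)
    have hne := Nat.find_min hk hj
    have hL0_eq : Lseq d ψ φ 0 = d + 1 := rfl
    omega
  refine ⟨Nat.find hk, Nat.find_spec hk, fun j => Nat.find_min hk,
    fun j hj => (hstep j (hrange j hj).1).2,
    stepQ_pos (prev := d + 1) hψpos hφpos (by omega) le_rfl, ?_⟩
  rintro (_ | j) hj1 hjk
  · omega
  · exact stepQ_lt_stepQ_stepL hφpos (hrange j (by omega)).1 (hrange j (by omega)).2
      (hrange (j + 1) hjk).1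

/-- The recursion terminates at some finite `k` with
`d + 1 = l_0 > l_1 > ⋯ > l_k = 1` and `0 < q_1 < q_2 < ⋯ < q_k`. -/
theorem recursion_terminates (d : ℕ) (hd : 1 ≤ d) (ψ φ : ℕ → ℝ)
    (hψ : DescProb d ψ) (hφ : DescProb d φ)
    (hψpos : ∀ i, 1 ≤ i → i ≤ d → 0 < ψ i) (hφpos : ∀ i, 1 ≤ i → i ≤ d → 0 < φ i) :
    ∃ k, Lseq d ψ φ k = 1 ∧ (∀ j, j < k → Lseq d ψ φ j ≠ 1) ∧
      (∀ j, j < k → Lseq d ψ φ (j + 1) < Lseq d ψ φ j) ∧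
      0 < Qseq d ψ φ 1 ∧
      (∀ j, 1 ≤ j → j < k → Qseq d ψ φ j < Qseq d ψ φ (j + 1)) :=
  recursion_terminates_general d hd ψ φ hψpos hφpos
end

section
/- Let ψ, φ ∈ ℝ^d be descending probability vectors. Among all descending probability vectors v with v ≺ φ (i.e., all vectors that can be deterministically transformed into φ), the meet ψ∧φ is the closest to ψ in the lattice distance: D(ψ, v) ≥ D(ψ, ψ∧φ) for every descending probability vector v with v ≺ φ. -/
open Finset

/-- The meet `p ∧ q` of two descending probability vectors in the majorization lattice,
defined componentwise via prefix sums (empty sums are `0`). -/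
noncomputable def meet2 (p q : ℕ → ℝ) (i : ℕ) : ℝ :=
  min (∑ j ∈ Finset.Icc 1 i, p j) (∑ j ∈ Finset.Icc 1 i, q j) -
    min (∑ j ∈ Finset.Icc 1 (i - 1), p j) (∑ j ∈ Finset.Icc 1 (i - 1), q j)

/-- The Gini index `G(p) = (d+1)/d - (2/d) ∑_{i=1}^d i p_i`. -/
noncomputable def gini (d : ℕ) (p : ℕ → ℝ) : ℝ :=
  (d + 1) / d - 2 / d * ∑ i ∈ Finset.Icc 1 d, (i : ℝ) * p i

/-- The lattice distance `D(p, q) = G(p) + G(q) - 2 G(p ∧ q)`. -/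
noncomputable def latDist (d : ℕ) (p q : ℕ → ℝ) : ℝ :=
  gini d p + gini d q - 2 * gini d (meet2 p q)

/-!
Writing `S_k(p) = p_1 + ⋯ + p_k` for the Lorenz curve, Abel summation turns the Gini index
into an affine function of `∑_k S_k(p)`, and the meet has Lorenz curve `min (S_k ψ) (S_k φ)`.
Hence for vectors of equal total mass the lattice distance is the `ℓ¹` distance
`D(p, q) = (2/d) ∑_k |S_k p - S_k q|` of Lorenz curves. Since `v ≺ φ` means `S_k v ≤ S_k φ`,
the claim follows termwise: `min (S_k ψ) (S_k φ)` is the point of the half-line `(-∞, S_k φ]`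
closest to `S_k ψ`, and `S_k v` lies on that half-line.
-/

noncomputable def prefixSum (p : ℕ → ℝ) (k : ℕ) : ℝ := ∑ j ∈ Icc 1 k, p j

lemma prefixSum_succ (p : ℕ → ℝ) (k : ℕ) : prefixSum p (k + 1) = prefixSum p k + p (k + 1) :=
  sum_Icc_succ_top (Nat.le_add_left 1 k) p

lemma prefixSum_meet2 (p q : ℕ → ℝ) (k : ℕ) :
    prefixSum (meet2 p q) k = min (prefixSum p k) (prefixSum q k) := by
  induction k with
  | zero => simp [prefixSum]
  | succ n ih =>
    rw [prefixSum_succ, ih, meet2, add_tsub_cancel_right]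
    exact add_sub_cancel _ _

lemma sum_Icc_natCast_mul_eq (p : ℕ → ℝ) (d : ℕ) :
    ∑ i ∈ Icc 1 d, (i : ℝ) * p i = (d + 1) * prefixSum p d - ∑ k ∈ Icc 1 d, prefixSum p k := by
  induction d with
  | zero => simp [prefixSum]
  | succ n ih =>
    rw [sum_Icc_succ_top (Nat.le_add_left 1 n), ih, sum_Icc_succ_top (Nat.le_add_left 1 n),
      prefixSum_succ]
    push_cast
    ring

lemma gini_eq (d : ℕ) (p : ℕ → ℝ) :
    gini d p = (d + 1) / d * (1 - 2 * prefixSum p d) + 2 / d * ∑ k ∈ Icc 1 d, prefixSum p k := by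
  rw [gini, sum_Icc_natCast_mul_eq]
  ring

lemma latDist_eq_sum_abs (d : ℕ) {p q : ℕ → ℝ} (h : prefixSum p d = prefixSum q d) :
    latDist d p q = 2 / d * ∑ k ∈ Icc 1 d, |prefixSum p k - prefixSum q k| := by
  have hterm (k : ℕ) : prefixSum p k + prefixSum q k - 2 * min (prefixSum p k) (prefixSum q k)
      = |prefixSum p k - prefixSum q k| := by
    linarith [max_sub_min_eq_abs' (prefixSum p k) (prefixSum q k),
      min_add_max (prefixSum p k) (prefixSum q k)]
  simp only [latDist, gini_eq, prefixSum_meet2, h, min_self, ← hterm, sum_sub_distrib,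
    sum_add_distrib, ← mul_sum]
  ring

lemma abs_sub_min_le_abs_sub {a b c : ℝ} (hcb : c ≤ b) : |a - min a b| ≤ |a - c| := by
  rw [abs_of_nonneg (sub_nonneg.mpr (min_le_left a b))]
  rcases min_cases a b with ⟨hmin, -⟩ | ⟨hmin, hba⟩ <;> rw [hmin]
  · simp
  · linarith [le_abs_self (a - c)]

theorem meet_closest_general (d : ℕ) (ψ φ v : ℕ → ℝ)
    (hψ : DescProb d ψ) (hv : DescProb d v)
    (hvφ : MajorizedBy d v φ) :
    latDist d ψ (meet2 ψ φ) ≤ latDist d ψ v := by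
  have hψv : prefixSum ψ d = prefixSum v d := hψ.sum_one.trans hv.sum_one.symm
  have hψφ : prefixSum ψ d = prefixSum (meet2 ψ φ) d := by
    have hvφ_total : prefixSum v d = prefixSum φ d := hvφ.2
    rw [prefixSum_meet2, hψv, hvφ_total, min_self]
  rw [latDist_eq_sum_abs d hψφ, latDist_eq_sum_abs d hψv]
  refine mul_le_mul_of_nonneg_left (sum_le_sum fun k hk => ?_) (by positivity)
  rw [prefixSum_meet2]
  exact abs_sub_min_le_abs_sub (hvφ.1 k (mem_Icc.mp hk).1 (mem_Icc.mp hk).2)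

/-- Among all descending probability vectors `v` with `v ≺ φ`, the meet
`ψ ∧ φ` is closest to `ψ` in the lattice distance: `D(ψ, v) ≥ D(ψ, ψ ∧ φ)`. -/
theorem meet_closest (d : ℕ) (hd : 1 ≤ d) (ψ φ v : ℕ → ℝ)
    (hψ : DescProb d ψ) (hφ : DescProb d φ) (hv : DescProb d v)
    (hvφ : MajorizedBy d v φ) :
    latDist d ψ (meet2 ψ φ) ≤ latDist d ψ v :=
  meet_closest_general d ψ φ v hψ hv hvφ
end

section
/- Let ψ, φ ∈ ℝ^d be descending probability vectors with all entries strictly positive, let φ^∧ = ψ∧φ be their meet, and suppose there exists l ∈ {1,…,d} with C_l(ψ) ≤ C_l(φ). Then the maximal transformation probability from ψ to φ^∧ equals the maximal transformation probability from ψ to φ: min_{l ∈ {1,…,d}} C_l(ψ)/C_l(φ^∧) = min_{l ∈ {1,…,d}} C_l(ψ)/C_l(φ), and the smallest index attaining the left-hand minimum equals the smallest index attaining the right-hand minimum. -/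
open Finset

/-!
Since ψ and φ have the same total mass and the prefix sums of ψ ∧ φ are the minima of those
of ψ and φ, the tail sums of the meet are `C_l(ψ ∧ φ) = max (C_l ψ) (C_l φ)`. Hence
`C_l ψ / C_l (ψ ∧ φ) = min (C_l ψ / C_l φ) 1`. The ratio equals `1` at the first index, so the
minimum over `l` is at most `1` and truncating at `1` changes neither the minimum nor, the first
index being the least one, its smallest minimizer.
-/

section ArgminOfMin

variable {ι : Type*} {s : Set ι} {F G : ι → ℝ} {c : ℝ}

theorem csInf_image_of_eqOn_min (hs : s.Finite) (hG : Set.EqOn G (fun i => min (F i) c) s)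
    (hFc : ∃ a ∈ s, F a ≤ c) : sInf (G '' s) = sInf (F '' s) := by
  obtain ⟨a, ha, hFa⟩ := hFc
  have hle : sInf (F '' s) ≤ c := (csInf_le (hs.image F).bddBelow ⟨a, ha, rfl⟩).trans hFa
  have hmono : Monotone fun x : ℝ => min x c := fun _ _ h => min_le_min_right c h
  calc sInf (G '' s) = sInf ((fun x => min x c) '' (F '' s)) := by
        rw [hG.image_eq, Set.image_image]
    _ = min (sInf (F '' s)) c :=
        (hmono.map_csInf_of_continuousAt (continuous_id.min continuous_const).continuousAt
          (Set.image_nonempty.2 ⟨a, ha⟩) (hs.image F).bddBelow).symm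
    _ = sInf (F '' s) := min_eq_left hle

theorem sInf_argmin_eq_of_eqOn_min [ConditionallyCompleteLattice ι] {a : ι} (hs : s.Finite)
    (ha : IsLeast s a) (hG : Set.EqOn G (fun i => min (F i) c) s) (hFa : F a = c) :
    sInf {i | i ∈ s ∧ G i = sInf (G '' s)} = sInf {i | i ∈ s ∧ F i = sInf (F '' s)} := by
  rw [csInf_image_of_eqOn_min hs hG ⟨a, ha.1, hFa.le⟩]
  set m := sInf (F '' s)
  have hmc : m ≤ c := hFa ▸ csInf_le (hs.image F).bddBelow ⟨a, ha.1, rfl⟩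
  rcases hmc.lt_or_eq with hlt | rfl
  · congr 1
    ext i
    refine and_congr_right fun hi => ?_
    rw [hG hi, min_eq_iff]
    constructor
    · rintro (⟨h, -⟩ | ⟨h, -⟩)
      · exact h
      · exact absurd h hlt.ne'
    · intro h
      exact Or.inl ⟨h, h ▸ hlt.le⟩
  · have hleast (P : ι → Prop) (hP : P a) : IsLeast {i | i ∈ s ∧ P i} a :=
      ⟨⟨ha.1, hP⟩, fun i hi => ha.2 hi.1⟩
    rw [(hleast _ (((hG ha.1).trans (min_eq_left hFa.le)).trans hFa)).csInf_eq,
      (hleast _ hFa).csInf_eq]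

end ArgminOfMin

theorem div_max_eq_min_div_one {α : Type*} [Field α] [LinearOrder α] [IsStrictOrderedRing α]
    {a b : α} (hb : 0 < b) : a / max a b = min (a / b) 1 := by
  rcases le_total a b with h | h
  · rw [max_eq_right h, min_eq_left ((div_le_one hb).2 h)]
  · rw [max_eq_left h, min_eq_right ((one_le_div hb).2 h), div_self (hb.trans_le h).ne']

theorem setOf_exists_Icc_eq_image {ι α : Type*} [Preorder ι] (F : ι → α) (a b : ι) :
    {x | ∃ l, a ≤ l ∧ l ≤ b ∧ x = F l} = F '' Set.Icc a b := by
  ext x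
  simp [eq_comm, and_assoc]

theorem sum_Icc_one_add_Cm (p : ℕ → ℝ) {m d : ℕ} (h : m ≤ d) :
    ∑ i ∈ Icc 1 m, p i + Cm d p (m + 1) = ∑ i ∈ Icc 1 d, p i := by
  simpa [Cm, ← Icc_add_one_left_eq_Ioc] using sum_Ioc_consecutive p (Nat.zero_le m) h

theorem sum_Icc_one_meet2 (p q : ℕ → ℝ) (k : ℕ) :
    ∑ i ∈ Icc 1 k, meet2 p q i = min (∑ i ∈ Icc 1 k, p i) (∑ i ∈ Icc 1 k, q i) := by
  induction k with
  | zero => simp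
  | succ k ih => rw [sum_Icc_succ_top (by omega), ih, meet2, Nat.add_sub_cancel]; ring

theorem Cm_meet2 {d m : ℕ} (p q : ℕ → ℝ) (hm : m ≤ d)
    (hpq : ∑ i ∈ Icc 1 d, p i = ∑ i ∈ Icc 1 d, q i) :
    Cm d (meet2 p q) (m + 1) = max (Cm d p (m + 1)) (Cm d q (m + 1)) := by
  have hp := sum_Icc_one_add_Cm p hm
  have hq := sum_Icc_one_add_Cm q hm
  have hmeet := sum_Icc_one_add_Cm (meet2 p q) hm
  rw [sum_Icc_one_meet2, sum_Icc_one_meet2, hpq, min_self] at hmeet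
  rw [eq_sub_of_add_eq' hmeet, ← max_sub_sub_left]
  congr 1 <;> linarith

theorem Cm_pos {d l : ℕ} {p : ℕ → ℝ} (hp : ∀ i, 1 ≤ i → i ≤ d → 0 < p i) (hl : 1 ≤ l)
    (hld : l ≤ d) : 0 < Cm d p l :=
  sum_pos (fun i hi => hp i (hl.trans (mem_Icc.1 hi).1) (mem_Icc.1 hi).2)
    ⟨l, mem_Icc.2 ⟨le_rfl, hld⟩⟩

theorem meet_same_probability_general (d : ℕ) (hd : 1 ≤ d) (ψ φ : ℕ → ℝ)
    (hψ : DescProb d ψ) (hφ : DescProb d φ)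
    (hφpos : ∀ i, 1 ≤ i → i ≤ d → 0 < φ i) :
    sInf {x : ℝ | ∃ l, 1 ≤ l ∧ l ≤ d ∧ x = Cm d ψ l / Cm d (meet2 ψ φ) l} =
        sInf {x : ℝ | ∃ l, 1 ≤ l ∧ l ≤ d ∧ x = Cm d ψ l / Cm d φ l} ∧
      sInf {l : ℕ | 1 ≤ l ∧ l ≤ d ∧ Cm d ψ l / Cm d (meet2 ψ φ) l =
          sInf {x : ℝ | ∃ l', 1 ≤ l' ∧ l' ≤ d ∧ x = Cm d ψ l' / Cm d (meet2 ψ φ) l'}} =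
        sInf {l : ℕ | 1 ≤ l ∧ l ≤ d ∧ Cm d ψ l / Cm d φ l =
          sInf {x : ℝ | ∃ l', 1 ≤ l' ∧ l' ≤ d ∧ x = Cm d ψ l' / Cm d φ l'}} := by
  have hratio : Set.EqOn (fun l => Cm d ψ l / Cm d (meet2 ψ φ) l)
      (fun l => min (Cm d ψ l / Cm d φ l) 1) (Set.Icc 1 d) := by
    rintro l ⟨hl, hld⟩
    obtain ⟨m, rfl⟩ := Nat.exists_eq_add_of_le' hl
    dsimp only
    rw [Cm_meet2 ψ φ (by omega) (hψ.sum_one.trans hφ.sum_one.symm),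
      div_max_eq_min_div_one (Cm_pos hφpos hl hld)]
  have hone : Cm d ψ 1 / Cm d φ 1 = 1 := by rw [Cm, Cm, hψ.sum_one, hφ.sum_one, div_one]
  have hleast : IsLeast (Set.Icc 1 d) 1 := isLeast_Icc hd
  simp only [setOf_exists_Icc_eq_image]
  simp only [← and_assoc]
  exact ⟨csInf_image_of_eqOn_min (Set.finite_Icc 1 d) hratio ⟨1, hleast.1, hone.le⟩,
    sInf_argmin_eq_of_eqOn_min (Set.finite_Icc 1 d) hleast hratio hone⟩

/-- If there is some `l` with `C_l(ψ) ≤ C_l(φ)`, then the maximal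
transformation probability from `ψ` to the meet `φ^∧ = ψ ∧ φ` equals that from `ψ` to
`φ`, and the smallest minimizing indices coincide. -/
theorem meet_same_probability (d : ℕ) (hd : 1 ≤ d) (ψ φ : ℕ → ℝ)
    (hψ : DescProb d ψ) (hφ : DescProb d φ)
    (hψpos : ∀ i, 1 ≤ i → i ≤ d → 0 < ψ i) (hφpos : ∀ i, 1 ≤ i → i ≤ d → 0 < φ i)
    (hex : ∃ l, 1 ≤ l ∧ l ≤ d ∧ Cm d ψ l ≤ Cm d φ l) :
    sInf {x : ℝ | ∃ l, 1 ≤ l ∧ l ≤ d ∧ x = Cm d ψ l / Cm d (meet2 ψ φ) l} =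
        sInf {x : ℝ | ∃ l, 1 ≤ l ∧ l ≤ d ∧ x = Cm d ψ l / Cm d φ l} ∧
      sInf {l : ℕ | 1 ≤ l ∧ l ≤ d ∧ Cm d ψ l / Cm d (meet2 ψ φ) l =
          sInf {x : ℝ | ∃ l', 1 ≤ l' ∧ l' ≤ d ∧ x = Cm d ψ l' / Cm d (meet2 ψ φ) l'}} =
        sInf {l : ℕ | 1 ≤ l ∧ l ≤ d ∧ Cm d ψ l / Cm d φ l =
          sInf {x : ℝ | ∃ l', 1 ≤ l' ∧ l' ≤ d ∧ x = Cm d ψ l' / Cm d φ l'}} :=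
  meet_same_probability_general d hd ψ φ hψ hφ hφpos
end
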